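/- arXiv:math/0412383 — 2 statements merged into one kernel-verified Lean document; each statement's English description precedes it below -/
import Mathlib

section
/- Let N be a finite solvable group and M a nilpotent normal subgroup of N whose quotient N/M is also nilpotent. Assume that for all distinct primes p dividing |N| and q dividing |M|, every Sylow p-subgroup of N centralizes the (unique) Sylow q-subgroup of M. Then N is nilpotent. -/
open CategoryTheory
open scoped BigOperators Classical Pointwise

/-- `χ` is the character of some finite-dimensional complex representation of `G`. -/
def IsChar (G : Type) [Group G] (χ : G → ℂ) : Prop :=
  ∃ V : FDRep ℂ G, FDRep.character V = χ

/-- `χ` is an irreducible complex character of `G`. -/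
def IsIrrChar (G : Type) [Group G] (χ : G → ℂ) : Prop :=
  ∃ V : FDRep ℂ G, Simple V ∧ FDRep.character V = χ

/-- `χ` is a character of `G` with determinantal (linear) character `δ`. -/
def IsCharWithDet (G : Type) [Group G] (χ : G → ℂ) (δ : G →* ℂ) : Prop :=
  ∃ V : FDRep ℂ G, FDRep.character V = χ ∧ ∀ g : G, δ g = LinearMap.det (V.ρ g)

/-- The induced class function from a subgroup `H` of `G` to `G`. -/
noncomputable def indChar {G : Type} [Group G] [Fintype G] (H : Subgroup G)
    (f : H → ℂ) : G → ℂ := fun g =>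
  (Fintype.card H : ℂ)⁻¹ * ∑ x : G, if h : x * g * x⁻¹ ∈ H then f ⟨x * g * x⁻¹, h⟩ else 0

/-- The class function of `K` induced from a function on a subgroup `H ≤ K` of `G`. -/
noncomputable def indCharRel {G : Type} [Group G] [Fintype G] (H K : Subgroup G)
    (f : H → ℂ) : K → ℂ := fun g =>
  (Fintype.card H : ℂ)⁻¹ *
    ∑ x : K, if h : (↑x * ↑g * (↑x)⁻¹ : G) ∈ H then f ⟨(↑x * ↑g * (↑x)⁻¹ : G), h⟩ else 0

/-- `χ` is a monomial character: induced from a linear character of some subgroup. -/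
def IsMonomial {G : Type} [Group G] [Fintype G] (χ : G → ℂ) : Prop :=
  ∃ (H : Subgroup G) (lam : H →* ℂ), indChar H (fun h => lam h) = χ

/-- `g` fixes the function `f` defined on the subgroup `H` under conjugation. -/
def fixesFn {G : Type} [Group G] (g : G) (H : Subgroup G) (f : H → ℂ) : Prop :=
  ∀ (x : G) (hx : x ∈ H) (hx' : g⁻¹ * x * g ∈ H), f ⟨g⁻¹ * x * g, hx'⟩ = f ⟨x, hx⟩

/-- The character `χ` of `G` lies over the irreducible character `f` of the subgroup `H`
(nonzero inner product of the restriction with `f`). -/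
def liesOver {G : Type} [Group G] [Fintype G] (H : Subgroup G) (χ : G → ℂ)
    (f : H → ℂ) : Prop :=
  (∑ x : H, χ ↑x * (starRingEnd ℂ) (f x)) ≠ 0

/-- The character `χ` of the subgroup `K` lies over the character `f` of `H ≤ K`. -/
def liesOverRel {G : Type} [Group G] [Fintype G] (H K : Subgroup G) (hHK : H ≤ K)
    (χ : K → ℂ) (f : H → ℂ) : Prop :=
  (∑ x : H, χ ⟨↑x, hHK x.2⟩ * (starRingEnd ℂ) (f x)) ≠ 0

/-- The Frattini subgroup: intersection of all maximal subgroups. -/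
def frattiniSub (G : Type*) [Group G] : Subgroup G :=
  ⨅ M ∈ {M : Subgroup G | IsCoatom M}, M

/-- A finite group is `p`-solvable if it has a subnormal series each of whose factors
is either a `p`-group or a `p'`-group. -/
def IsPSolvable (p : ℕ) (G : Type*) [Group G] : Prop :=
  ∃ (n : ℕ) (c : Fin (n + 1) → Subgroup G),
    c 0 = ⊥ ∧ c (Fin.last n) = ⊤ ∧
    ∀ i : Fin n,
      c i.castSucc ≤ c i.succ ∧
      (∀ g ∈ c i.succ, ∀ x ∈ c i.castSucc, g * x * g⁻¹ ∈ c i.castSucc) ∧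
      ((∃ k : ℕ, Nat.card (c i.succ) = p ^ k * Nat.card (c i.castSucc)) ∨
        Nat.Coprime (Nat.card (c i.succ) / Nat.card (c i.castSucc)) p)

/-! Every Sylow `p`-subgroup `P` of `N` is normal. Indeed `M` normalizes `P`: the Sylow
`q`-subgroups of `M` for `q ≠ p` centralize `P`, and the Sylow `p`-subgroup of `M` is normal
in `N`, hence lies in `P`. As `N ⧸ M` is nilpotent, the image of `P` there is normal, so
`P ⊔ M` is normal in `N`, and the Frattini argument gives `N = N_N(P) ⊔ M = N_N(P)`. -/

open Subgroup

theorem Subgroup.eq_top_of_forall_sylow_le {G : Type*} [Group G] [Finite G] {K : Subgroup G}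
    (h : ∀ q : ℕ, q.Prime → q ∣ Nat.card G → ∃ Q : Sylow q G, (Q : Subgroup G) ≤ K) :
    K = ⊤ := by
  rw [← index_eq_one, Nat.eq_one_iff_not_exists_prime_dvd]
  intro q hq hqK
  have := Fact.mk hq
  obtain ⟨Q, hQK⟩ := h q hq (hqK.trans K.index_dvd_card)
  exact Q.not_dvd_index (hqK.trans (index_dvd_of_le hQK))

theorem Sylow.coe_eq_bot_of_not_dvd_card {G : Type*} [Group G] [Finite G] {p : ℕ}
    [Fact p.Prime] (P : Sylow p G) (hp : ¬p ∣ Nat.card G) : (P : Subgroup G) = ⊥ :=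
  card_eq_one.mp <| P.isPGroup'.card_eq_or_dvd.resolve_right
    fun h ↦ hp (h.trans (card_subgroup_dvd_card _))

theorem Sylow.normal_of_map_normal_of_le_normalizer {G : Type*} [Group G] [Finite G] {p : ℕ}
    [Fact p.Prime] {M : Subgroup G} [M.Normal] (P : Sylow p G)
    (hPM : ((P : Subgroup G).map (QuotientGroup.mk' M)).Normal)
    (hM : M ≤ normalizer (P : Set G)) : (P : Subgroup G).Normal := by
  have : ((P : Subgroup G) ⊔ M).Normal := by
    rw [← QuotientGroup.ker_mk' M, ← comap_map_eq]
    exact hPM.comap _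
  -- Frattini argument in the normal subgroup `P ⊔ M`
  rw [← normalizer_eq_top_iff,
    ← P.normalizer_sup_eq_top' (N := (P : Subgroup G) ⊔ M) le_sup_left, P.coe_coe, left_eq_sup]
  exact sup_le le_normalizer hM

theorem Sylow.normal_map_subtype {G : Type*} [Group G] {p : ℕ} [Fact p.Prime] {M : Subgroup G}
    [M.Normal] [Finite M] [Group.IsNilpotent M] (Q : Sylow p M) :
    ((Q : Subgroup M).map M.subtype).Normal :=
  have := Q.characteristic_of_normal inferInstance
  inferInstance

theorem Sylow.le_normalizer_of_commute_sylow {G : Type*} [Group G] [Finite G] {p : ℕ} [Fact p.Prime]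
    {M : Subgroup G} [M.Normal] [Group.IsNilpotent M] (P : Sylow p G)
    (hcomm : ∀ q : ℕ, q.Prime → q ≠ p → q ∣ Nat.card M → ∀ Q : Sylow q M,
      ∀ x ∈ (P : Subgroup G), ∀ y ∈ (Q : Subgroup M).map M.subtype, Commute x y) :
    M ≤ normalizer (P : Set G) := by
  rw [← subgroupOf_eq_top]
  refine eq_top_of_forall_sylow_le fun q hq hqM ↦ ?_
  have := Fact.mk hq
  obtain ⟨Q⟩ := (inferInstance : Nonempty (Sylow q M))
  refine ⟨Q, ?_⟩
  rw [subgroupOf, ← map_le_iff_le_comap]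
  rcases eq_or_ne q p with rfl | hqp
  · have := Q.normal_map_subtype
    exact ((Q.isPGroup'.map M.subtype).le_sylow_of_normal P).trans le_normalizer
  · have hQP : (Q : Subgroup M).map M.subtype ≤ centralizer (P : Set G) :=
      fun y hy x hx ↦ hcomm q hq hqp hqM Q x hx y hy
    exact hQP.trans (centralizer_le_normalizer _)

theorem stmt0_general {N : Type*} [Group N] [Fintype N]
    (M : Subgroup N) [M.Normal]
    (hMnil : Group.IsNilpotent M) (hquot : Group.IsNilpotent (N ⧸ M))
    (hcent : ∀ (p q : ℕ), p.Prime → q.Prime → p ≠ q →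
      p ∣ Fintype.card N → q ∣ Fintype.card M →
      ∀ (P : Sylow p N) (Q : Sylow q M),
        ∀ x ∈ (P : Subgroup N), ∀ y ∈ Subgroup.map M.subtype (Q : Subgroup M),
          Commute x y) :
    Group.IsNilpotent N := by
  refine (Group.isNilpotent_of_finite_tfae.out 3 0).mp ?_
  intro p hp P
  by_cases hpN : p ∣ Nat.card N
  · have hPM : ((P : Subgroup N).map (QuotientGroup.mk' M)).Normal :=
      (inferInstance : (P.mapSurjective (QuotientGroup.mk'_surjective M)).Normal)
    refine P.normal_of_map_normal_of_le_normalizer hPM (P.le_normalizer_of_commute_sylow ?_)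
    intro q hq hqp hqM
    rw [Nat.card_eq_fintype_card] at hpN hqM
    exact hcent p q hp.out hq hqp.symm hpN hqM P
  · rw [P.coe_eq_bot_of_not_dvd_card hpN]
    infer_instance

/-- A finite solvable group `N` with a nilpotent normal subgroup `M` such that
`N/M` is nilpotent and every Sylow `p`-subgroup of `N` centralizes the Sylow `q`-subgroup of
`M` for all distinct primes `p ∣ |N|`, `q ∣ |M|`, is nilpotent. -/
theorem stmt0 {N : Type*} [Group N] [Fintype N] (hsolv : IsSolvable N)
    (M : Subgroup N) [M.Normal]
    (hMnil : Group.IsNilpotent M) (hquot : Group.IsNilpotent (N ⧸ M))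
    (hcent : ∀ (p q : ℕ), p.Prime → q.Prime → p ≠ q →
      p ∣ Fintype.card N → q ∣ Fintype.card M →
      ∀ (P : Sylow p N) (Q : Sylow q M),
        ∀ x ∈ (P : Subgroup N), ∀ y ∈ Subgroup.map M.subtype (Q : Subgroup M),
          Commute x y) :
    Group.IsNilpotent N :=
  stmt0_general M hMnil hquot hcent
end

section
/- Let P be a p-subgroup and Q₁ ≤ Q be q-subgroups of a finite group G, where p and q are distinct primes. If P normalizes Q₁ and Q normalizes the product Q₁P, then Q normalizes Q₁, the product QP is a subgroup of G, Q₁P is normal in QP, and Q₁ is normal in QP. -/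
open CategoryTheory
open scoped BigOperators Classical Pointwise

/-- If `H` normalizes `K`, the carrier of `H ⊔ K` is the pointwise product `↑H * ↑K`. -/
theorem aux_mul_of_le_normalizer {G : Type*} [Group G] (H K : Subgroup G)
    (hN : H ≤ Subgroup.normalizer (K : Set G)) : (↑(H ⊔ K) : Set G) = (H : Set G) * (K : Set G) := by
  have key : ∀ h : G, h ∈ H → ∀ k : G, k ∈ K → h * k * h⁻¹ ∈ K := fun h hh k hk =>
    (Subgroup.mem_normalizer_iff.mp (hN hh) k).mp hk
  rw [Subgroup.sup_eq_closure_mul]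
  refine Set.Subset.antisymm (fun x hx => ?_) Subgroup.subset_closure
  induction hx using Subgroup.closure_induction'' with
  | one => exact ⟨1, one_mem _, 1, one_mem _, mul_one 1⟩
  | mem x hx => exact hx
  | inv_mem x hx =>
    obtain ⟨x, hx, y, hy, rfl⟩ := hx
    exact ⟨x⁻¹, inv_mem hx, x * y⁻¹ * x⁻¹, key x hx _ (inv_mem hy), by group⟩
  | mul x x' _ _ hx hx' =>
    obtain ⟨x, hx, y, hy, rfl⟩ := hx
    obtain ⟨x', hx', y', hy', rfl⟩ := hx'
    exact ⟨x * x', mul_mem hx hx',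
      x'⁻¹ * y * x' * y', mul_mem (by simpa using key x'⁻¹ (inv_mem hx') y hy) hy', by group⟩

/-- A `q`-subgroup of `Q₁ ⊔ P` (with `P` a `p`-group normalizing the `q`-group `Q₁`,
`p ≠ q`) is contained in `Q₁`. -/
theorem aux_le_of_isPGroup_le_sup {G : Type*} [Group G] {p q : ℕ}
    (hp : p.Prime) (hq : q.Prime) (hpq : p ≠ q)
    {P Q₁ S : Subgroup G} (hP : IsPGroup p P) (hS : IsPGroup q S)
    (hnormP : P ≤ Subgroup.normalizer (Q₁ : Set G)) (hSle : S ≤ Q₁ ⊔ P) : S ≤ Q₁ := by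
  set N := Subgroup.normalizer (Q₁ : Set G) with hNdef
  have hQ₁N : Q₁ ≤ N := Subgroup.le_normalizer
  have hHN : Q₁ ⊔ P ≤ N := sup_le hQ₁N hnormP
  have hSN : S ≤ N := hSle.trans hHN
  haveI : (Q₁.subgroupOf N).Normal := Subgroup.normal_in_normalizer
  set π : N →* N ⧸ Q₁.subgroupOf N := QuotientGroup.mk' _ with hπdef
  intro x hx
  have hxN : x ∈ N := hSN hx
  have hxH : x ∈ Q₁ ⊔ P := hSle hx
  set y : N := ⟨x, hxN⟩ with hydef
  have hyP : π y ∈ (P.subgroupOf N).map π := by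
    have h1 : y ∈ (Q₁ ⊔ P).subgroupOf N := by
      rwa [Subgroup.mem_subgroupOf]
    have h2 : Q₁.subgroupOf N ⊔ P.subgroupOf N = (Q₁ ⊔ P).subgroupOf N :=
      (Subgroup.subgroupOf_sup hQ₁N hnormP).symm
    have h3 : π y ∈ (Q₁.subgroupOf N ⊔ P.subgroupOf N).map π :=
      Subgroup.mem_map_of_mem π (h2 ▸ h1)
    rwa [Subgroup.map_sup, QuotientGroup.map_mk'_self, bot_sup_eq] at h3
  have hPmap : IsPGroup p ((P.subgroupOf N).map π) := (hP.comap_subtype).map π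
  obtain ⟨k, hk⟩ := hPmap ⟨π y, hyP⟩
  have hpk : (π y) ^ p ^ k = 1 := by
    have := congrArg (Subtype.val) hk
    simpa using this
  obtain ⟨l, hl⟩ := hS ⟨x, hx⟩
  have hxl : x ^ q ^ l = 1 := by
    have := congrArg (Subtype.val) hl
    simpa using this
  have hyl : y ^ q ^ l = 1 := by
    ext
    simpa using hxl
  have hql : (π y) ^ q ^ l = 1 := by
    rw [← map_pow, hyl, map_one]
  have h1 : orderOf (π y) ∣ p ^ k := orderOf_dvd_of_pow_eq_one hpk
  have h2 : orderOf (π y) ∣ q ^ l := orderOf_dvd_of_pow_eq_one hql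
  have hcop : Nat.Coprime (p ^ k) (q ^ l) :=
    ((Nat.coprime_primes hp hq).mpr hpq).pow k l
  have hord : orderOf (π y) = 1 := Nat.eq_one_of_dvd_coprimes hcop h1 h2
  have hy1 : π y = 1 := orderOf_eq_one_iff.mp hord
  have : y ∈ Q₁.subgroupOf N := (QuotientGroup.eq_one_iff y).mp hy1
  rwa [Subgroup.mem_subgroupOf] at this

/-- If a `p`-subgroup `P` normalizes a `q`-subgroup `Q₁ ≤ Q` and the
`q`-subgroup `Q` normalizes the product `Q₁P`, then `Q` normalizes `Q₁`, `QP` is a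
subgroup, `Q₁P ⊴ QP` and `Q₁ ⊴ QP`. -/
theorem stmt1 {G : Type*} [Group G] [Fintype G] {p q : ℕ}
    (hp : p.Prime) (hq : q.Prime) (hpq : p ≠ q)
    (P Q₁ Q : Subgroup G) (hP : IsPGroup p P) (hQ₁ : IsPGroup q Q₁) (hQ : IsPGroup q Q)
    (hle : Q₁ ≤ Q) (hnormP : P ≤ Subgroup.normalizer (Q₁ : Set G)) (hnormQ : Q ≤ Subgroup.normalizer ((Q₁ ⊔ P : Subgroup G) : Set G)) :
    Q ≤ Subgroup.normalizer (Q₁ : Set G) ∧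
    ((Q : Set G) * (P : Set G)) = ((Q ⊔ P : Subgroup G) : Set G) ∧
    (Q₁ ⊔ P ≤ Q ⊔ P ∧ Q ⊔ P ≤ Subgroup.normalizer ((Q₁ ⊔ P : Subgroup G) : Set G)) ∧
    Q ⊔ P ≤ Subgroup.normalizer (Q₁ : Set G) := by
  -- Key: every conjugate of `Q₁` by an element of `Q` is inside `Q₁`.
  have key : ∀ g ∈ Q, ∀ h ∈ Q₁, g * h * g⁻¹ ∈ Q₁ := by
    intro g hg h hh
    set f := MulAut.conj g with hfdef
    set S := Q₁.map f.toMonoidHom with hSdef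
    have hS : IsPGroup q S := hQ₁.map _
    have hSle : S ≤ Q₁ ⊔ P := by
      rintro _ ⟨x, hx, rfl⟩
      have hxH : x ∈ Q₁ ⊔ P := (le_sup_left : Q₁ ≤ Q₁ ⊔ P) hx
      have := (Subgroup.mem_normalizer_iff.mp (hnormQ hg) x).mp hxH
      simpa [hfdef, MulAut.conj_apply] using this
    have hfin : S ≤ Q₁ := aux_le_of_isPGroup_le_sup hp hq hpq hP hS hnormP hSle
    have : f.toMonoidHom h ∈ S := Subgroup.mem_map_of_mem _ hh
    simpa [hfdef, MulAut.conj_apply] using hfin this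
  have hQn : Q ≤ Subgroup.normalizer (Q₁ : Set G) := by
    intro g hg
    rw [Subgroup.mem_normalizer_iff]
    intro h
    constructor
    · exact fun hh => key g hg h hh
    · intro hh
      have h2 := key g⁻¹ (inv_mem hg) _ hh
      have h3 : g⁻¹ * (g * h * g⁻¹) * g⁻¹⁻¹ = h := by group
      rwa [h3] at h2
  refine ⟨hQn, ?_, ⟨sup_le_sup_right hle P, sup_le hnormQ
    (le_trans le_sup_right Subgroup.le_normalizer)⟩, sup_le hQn hnormP⟩
  -- the product set equality
  have e0 : Q ⊔ (Q₁ ⊔ P) = Q ⊔ P := by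
    rw [← sup_assoc, sup_of_le_left hle]
  have e1 : ((Q ⊔ P : Subgroup G) : Set G) = (Q : Set G) * ((Q₁ ⊔ P : Subgroup G) : Set G) := by
    rw [← e0]
    exact aux_mul_of_le_normalizer Q (Q₁ ⊔ P) hnormQ
  have e2 : ((Q₁ ⊔ P : Subgroup G) : Set G) = (P : Set G) * (Q₁ : Set G) := by
    rw [sup_comm]
    exact aux_mul_of_le_normalizer P Q₁ hnormP
  have e3 : (P : Set G) * (Q₁ : Set G) = (Q₁ : Set G) * (P : Set G) := by
    apply Set.Subset.antisymm
    · rintro _ ⟨a, ha, b, hb, rfl⟩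
      refine ⟨a * b * a⁻¹, (Subgroup.mem_normalizer_iff.mp (hnormP ha) b).mp hb, a, ha, by group⟩
    · rintro _ ⟨b, hb, a, ha, rfl⟩
      refine ⟨a, ha, a⁻¹ * b * a, ?_, by group⟩
      have := (Subgroup.mem_normalizer_iff.mp (hnormP (inv_mem ha)) b).mp hb
      simpa using this
  have e4 : (Q : Set G) * (Q₁ : Set G) = (Q : Set G) := by
    apply Set.Subset.antisymm
    · rintro _ ⟨a, ha, b, hb, rfl⟩
      exact mul_mem ha (hle hb)
    · intro x hx
      exact ⟨x, hx, 1, one_mem _, mul_one x⟩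
  rw [e1, e2, e3, ← mul_assoc, e4]
end
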